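/- Let n ≥ 8 and let F ⊆ C([n],3) be a shifted family with property U(3,7) such that {2,3,4} ∈ F. Then {1,6,8} ∉ F. -/

import Mathlib

open Finset
open scoped Classical

/-- `F` has property `U(s,q)`: any `s` (not necessarily distinct) members have union of size `≤ q`. -/
def propU (F : Finset (Finset ℕ)) (s q : ℕ) : Prop :=
  ∀ G : Fin s → Finset ℕ, (∀ i, G i ∈ F) → (Finset.univ.sup G).card ≤ q

/-- `A(p,r,n,k)`: the `k`-subsets of `[n] = {1,…,n}` meeting `[p]` in at least `r` elements. -/
def famA (p r n k : ℕ) : Finset (Finset ℕ) :=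
  (Finset.powersetCard k (Finset.Icc 1 n)).filter fun A => r ≤ (A ∩ Finset.Icc 1 p).card

/-- `G ≼ F`: comparing the increasing enumerations elementwise. -/
def shiftLE (G F : Finset ℕ) : Prop :=
  List.Forall₂ (· ≤ ·) (G.sort (· ≤ ·)) (F.sort (· ≤ ·))

/-- `F ⊆ C([n],k)` is shifted. -/
def IsShifted (n k : ℕ) (F : Finset (Finset ℕ)) : Prop :=
  ∀ A ∈ F, ∀ G ∈ Finset.powersetCard k (Finset.Icc 1 n), shiftLE G A → G ∈ F

/-- `m(n,k,s,q)`: the maximum size of a family `F ⊆ C([n],k)` with property `U(s,q)`. -/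
noncomputable def mMax (n k s q : ℕ) : ℕ :=
  ((Finset.powersetCard k (Finset.Icc 1 n)).powerset.filter fun F => propU F s q).sup
    Finset.card

theorem sort_triple {a b c : ℕ} (hab : a < b) (hbc : b < c) :
    ({a, b, c} : Finset ℕ).sort (· ≤ ·) = [a, b, c] := by
  rw [Finset.sort_insert _ (fun x hx => by simp at hx; omega) (by simp; omega),
    Finset.sort_insert _ (fun x hx => by simp at hx; omega) (by simp; omega),
    Finset.sort_singleton]

theorem shiftLE_triple {a b c a' b' c' : ℕ} (hab : a < b) (hbc : b < c)
    (hab' : a' < b') (hbc' : b' < c') (ha : a ≤ a') (hb : b ≤ b') (hc : c ≤ c') :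
    shiftLE {a, b, c} {a', b', c'} := by
  rw [shiftLE, sort_triple hab hbc, sort_triple hab' hbc']
  exact .cons ha (.cons hb (.cons hc .nil))

theorem IsShifted.triple_mem {n : ℕ} {F : Finset (Finset ℕ)} (hF : IsShifted n 3 F)
    {a b c a' b' c' : ℕ} (hmem : ({a', b', c'} : Finset ℕ) ∈ F)
    (h1a : 1 ≤ a) (hab : a < b) (hbc : b < c) (hcn : c ≤ n)
    (hab' : a' < b') (hbc' : b' < c') (ha : a ≤ a') (hb : b ≤ b') (hc : c ≤ c') :
    ({a, b, c} : Finset ℕ) ∈ F := by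
  refine hF _ hmem _ ?_ (shiftLE_triple hab hbc hab' hbc' ha hb hc)
  rw [Finset.mem_powersetCard, Finset.card_eq_three]
  refine ⟨fun x hx => ?_, a, b, c, by omega, by omega, by omega, rfl⟩
  simp only [Finset.mem_insert, Finset.mem_singleton] at hx
  rw [Finset.mem_Icc]
  omega

theorem propU.card_union_le {F : Finset (Finset ℕ)} {q : ℕ} (hU : propU F 3 q)
    {A B C : Finset ℕ} (hA : A ∈ F) (hB : B ∈ F) (hC : C ∈ F) :
    (A ∪ B ∪ C).card ≤ q := by
  have := hU ![A, B, C] (fun i => by fin_cases i <;> assumption)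
  simpa [Fin.univ_succ, Finset.sup_insert, Finset.union_assoc] using this

theorem stmt13_general (n : ℕ) (hn : 8 ≤ n)
    (F : Finset (Finset ℕ))
    (hshift : IsShifted n 3 F) (hU : propU F 3 7)
    (hmem : ({2, 3, 4} : Finset ℕ) ∈ F) :
    ({1, 6, 8} : Finset ℕ) ∉ F := by
  intro h168
  have h157 : ({1, 5, 7} : Finset ℕ) ∈ F :=
    hshift.triple_mem h168 le_rfl (by norm_num) (by norm_num) (by omega)
      (by norm_num) (by norm_num) le_rfl (by norm_num) (by norm_num)
  -- {2,3,4}, {1,6,8} and {1,5,7} together cover all of [8].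
  exact absurd (hU.card_union_le hmem h168 h157) (by decide)

/-- (part of) Claim 2.10 of the paper. -/
theorem stmt13 (n : ℕ) (hn : 8 ≤ n)
    (F : Finset (Finset ℕ)) (hF : F ⊆ Finset.powersetCard 3 (Finset.Icc 1 n))
    (hshift : IsShifted n 3 F) (hU : propU F 3 7)
    (hmem : ({2, 3, 4} : Finset ℕ) ∈ F) :
    ({1, 6, 8} : Finset ℕ) ∉ F :=
  stmt13_general n hn F hshift hU hmem
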